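/- arXiv:2204.12462 — 6 statements merged into one kernel-verified Lean document; each statement's English description precedes it below -/
import Mathlib

section
/- Let E be a real normed vector space and let p be a natural number. Fix W ≥ 0 and r̄ ≥ 0. Let J be a nonempty finite index set, and for each j ∈ J let η_j : E → ℝ be a continuous linear functional with operator norm ‖η_j‖ ≤ W, let c_j ∈ ℝ, let π_j > 0, and let r_j ∈ EuclideanSpace ℝ (Fin p) with ‖r_j‖ ≤ r̄. Define f : E → EuclideanSpace ℝ (Fin p) by f(w) = (∑_{j∈J} π_j · exp(η_j(w) − c_j) · r_j) / (∑_{j∈J} π_j · exp(η_j(w) − c_j)). Then f is Lipschitz with constant r̄·√p·W, i.e. ‖f(w) − f(w')‖ ≤ r̄·√p·W·‖w − w'‖ for all w, w' ∈ E. -/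
/-!
Writing each prior weight as `exp (log π_j)`, the posterior mean is `∑ j, softmax (s w) j • r j`
for scores `s_j w = log π_j + η_j w - c_j` that are affine in `w`. Along the segment from `w'`
to `w` the scores move with velocities `δ_j = η_j (w - w')`, `|δ_j| ≤ W ‖w - w'‖`, and the
derivative of the softmax mean is the covariance `∑ j, q_j (δ_j - ∑ i, q_i δ_i) • r_j`. Its norm
is at most `r̄` times the mean absolute deviation of `δ`, which Cauchy–Schwarz bounds by the root
second moment, hence by `W ‖w - w'‖`. So the posterior mean is even `r̄ W`-Lipschitz.
-/

open Real Finset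

section Softmax

variable {J : Type*} [Fintype J]

noncomputable def softmax (s : J → ℝ) (j : J) : ℝ :=
  exp (s j) / ∑ i, exp (s i)

theorem softmax_nonneg (s : J → ℝ) (j : J) : 0 ≤ softmax s j := by
  unfold softmax; positivity

theorem sum_exp_pos [Nonempty J] (s : J → ℝ) : 0 < ∑ i, exp (s i) :=
  sum_pos (fun i _ => exp_pos (s i)) univ_nonempty

theorem sum_softmax [Nonempty J] (s : J → ℝ) : ∑ j, softmax s j = 1 := by
  simp only [softmax, ← sum_div]
  exact div_self (sum_exp_pos s).ne'

theorem HasDerivAt.softmax [Nonempty J] {s : ℝ → J → ℝ} {s' : J → ℝ} {t : ℝ}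
    (hs : ∀ j, HasDerivAt (fun t => s t j) (s' j) t) (j : J) :
    HasDerivAt (fun t => softmax (s t) j)
      (softmax (s t) j * (s' j - ∑ i, softmax (s t) i * s' i)) t := by
  have hexp : ∀ i, HasDerivAt (fun t => Real.exp (s t i)) (Real.exp (s t i) * s' i) t :=
    fun i => (hs i).exp
  refine ((hexp j).fun_div (HasDerivAt.fun_sum fun i _ => hexp i)
    (sum_exp_pos (s t)).ne').congr_deriv ?_
  simp only [_root_.softmax, div_mul_eq_mul_div, ← sum_div]
  field_simp

theorem sum_mul_abs_sub_sum_mul_le {q Y : J → ℝ} {B : ℝ} (hq : ∀ j, 0 ≤ q j)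
    (hq1 : ∑ j, q j = 1) (hB : 0 ≤ B) (hY : ∀ j, |Y j| ≤ B) :
    ∑ j, q j * |Y j - ∑ i, q i * Y i| ≤ B := by
  set m := ∑ i, q i * Y i
  have hvar : ∑ j, q j * (Y j - m) ^ 2 = ∑ j, q j * Y j ^ 2 - m ^ 2 := by
    have h : ∀ j, q j * (Y j - m) ^ 2 = q j * Y j ^ 2 - 2 * m * (q j * Y j) + m ^ 2 * q j :=
      fun j => by ring
    simp only [h, sum_add_distrib, sum_sub_distrib, ← mul_sum, hq1]
    ring
  have hsecond : ∑ j, q j * Y j ^ 2 ≤ B ^ 2 := calc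
    ∑ j, q j * Y j ^ 2 ≤ ∑ j, q j * B ^ 2 :=
      sum_le_sum fun j _ => mul_le_mul_of_nonneg_left (sq_le_sq' (abs_le.mp (hY j)).1
        (abs_le.mp (hY j)).2) (hq j)
    _ = B ^ 2 := by rw [← sum_mul, hq1, one_mul]
  have hcs : (∑ j, q j * |Y j - m|) ^ 2 ≤ (∑ j, q j) * ∑ j, q j * (Y j - m) ^ 2 :=
    sum_sq_le_sum_mul_sum_of_sq_le_mul univ (fun j _ => hq j)
      (fun j _ => mul_nonneg (hq j) (sq_nonneg _))
      fun j _ => le_of_eq (by rw [mul_pow, sq_abs]; ring)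
  rw [hq1, one_mul, hvar] at hcs
  exact (abs_le_of_sq_le_sq' (by linarith [sq_nonneg m]) hB).2

variable {F : Type*} [NormedAddCommGroup F] [NormedSpace ℝ F]

theorem norm_sum_softmax_add_smul_sub_le [Nonempty J] {b δ : J → ℝ} {r : J → F} {D R : ℝ}
    (hD : 0 ≤ D) (hδ : ∀ j, |δ j| ≤ D) (hR : 0 ≤ R) (hr : ∀ j, ‖r j‖ ≤ R) :
    ‖∑ j, softmax (b + δ) j • r j - ∑ j, softmax b j • r j‖ ≤ R * D := by
  set q : ℝ → J → ℝ := fun t => softmax (b + t • δ)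
  have hderiv : ∀ t, HasDerivAt (fun t => ∑ j, q t j • r j)
      (∑ j, (q t j * (δ j - ∑ i, q t i * δ i)) • r j) t := fun t =>
    HasDerivAt.fun_sum fun j _ =>
      (HasDerivAt.softmax (fun i => (hasDerivAt_mul_const (δ i)).const_add (b i)) j).smul_const
        (r j)
  have hbound : ∀ t, ‖∑ j, (q t j * (δ j - ∑ i, q t i * δ i)) • r j‖ ≤ R * D := fun t => calc
    _ ≤ ∑ j, ‖(q t j * (δ j - ∑ i, q t i * δ i)) • r j‖ := norm_sum_le _ _
    _ ≤ ∑ j, q t j * |δ j - ∑ i, q t i * δ i| * R := by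
      gcongr with j
      rw [norm_smul, Real.norm_eq_abs, abs_mul, abs_of_nonneg (softmax_nonneg _ j)]
      exact mul_le_mul_of_nonneg_left (hr j) (mul_nonneg (softmax_nonneg _ j) (abs_nonneg _))
    _ = R * ∑ j, q t j * |δ j - ∑ i, q t i * δ i| := by
      rw [mul_sum]; exact sum_congr rfl fun j _ => mul_comm _ _
    _ ≤ R * D := by
      gcongr
      exact sum_mul_abs_sub_sum_mul_le (softmax_nonneg _) (sum_softmax _) hD hδ
  simpa [q] using norm_image_sub_le_of_norm_deriv_le_segment_01'
    (fun t _ => (hderiv t).hasDerivWithinAt) (fun t _ => hbound t)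

theorem inv_sum_mul_exp_smul_sum_eq {a s : J → ℝ} (ha : ∀ j, 0 < a j) (r : J → F) :
    (∑ j, a j * exp (s j))⁻¹ • ∑ j, (a j * exp (s j)) • r j
      = ∑ j, softmax (fun j => log (a j) + s j) j • r j := by
  have hexp : ∀ j, a j * exp (s j) = exp (log (a j) + s j) := fun j => by
    rw [exp_add, exp_log (ha j)]
  simp only [hexp, softmax, smul_sum, smul_smul, div_eq_inv_mul]

end Softmax

/-- Bayes posterior means under finitely supported priors with likelihood-ratio
functionals bounded in dual norm by `W` and estimand bounded by `rbar` are
Lipschitz with constant `rbar * √p * W`. -/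
theorem softmax_posterior_mean_lipschitz
    {E : Type*} [NormedAddCommGroup E] [NormedSpace ℝ E]
    (p : ℕ) (W rbar : ℝ) (hW : 0 ≤ W) (hrbar : 0 ≤ rbar)
    {J : Type*} [Fintype J] [Nonempty J]
    (η : J → E →L[ℝ] ℝ) (hη : ∀ j, ‖η j‖ ≤ W)
    (c : J → ℝ) (pj : J → ℝ) (hpj : ∀ j, 0 < pj j)
    (r : J → EuclideanSpace ℝ (Fin p)) (hr : ∀ j, ‖r j‖ ≤ rbar)
    (f : E → EuclideanSpace ℝ (Fin p))
    (hf : ∀ w, f w = (∑ j, pj j * Real.exp (η j w - c j))⁻¹ •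
      ∑ j, (pj j * Real.exp (η j w - c j)) • r j) :
    ∀ w w' : E, ‖f w - f w'‖ ≤ rbar * Real.sqrt p * W * ‖w - w'‖ := by
  intro w w'
  set s : E → J → ℝ := fun v j => log (pj j) + (η j v - c j)
  have hfs : ∀ v, f v = ∑ j, softmax (s v) j • r j := fun v =>
    (hf v).trans (inv_sum_mul_exp_smul_sum_eq hpj r)
  have hline : s w = s w' + fun j => η j (w - w') := by
    ext j; simp only [s, Pi.add_apply, map_sub]; ring
  have hmean : ‖f w - f w'‖ ≤ rbar * (W * ‖w - w'‖) := by
    rw [hfs, hfs, hline]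
    exact norm_sum_softmax_add_smul_sub_le (by positivity)
      (fun j => (η j).le_of_opNorm_le (hη j) (w - w')) hrbar hr
  rcases Nat.eq_zero_or_pos p with rfl | hp
  · simp [Subsingleton.elim (f w) (f w')]
  · calc ‖f w - f w'‖ ≤ rbar * 1 * W * ‖w - w'‖ := by linarith
      _ ≤ rbar * Real.sqrt p * W * ‖w - w'‖ := by
        gcongr
        exact Real.one_le_sqrt.mpr (by exact_mod_cast hp)
end

section
/- Let E and F be real normed vector spaces, and let S ⊆ E be a set closed under multiplication by positive scalars (c • x ∈ S whenever c > 0 and x ∈ S). Suppose δ : E → F is K-Lipschitz on S for some constant K ≥ 0 and is scale-invariant on S, meaning δ(c • x) = δ(x) for all c > 0 and all x ∈ S. Then δ is constant on S: δ(x) = δ(x') for all x, x' ∈ S. -/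
/-! Rescaling both points by `c > 0` leaves the values of `δ` unchanged but multiplies their
distance by `c`, so `‖δ x - δ y‖ ≤ c * K * ‖x - y‖` for every `c > 0`; let `c → 0⁺`. -/

open Filter Topology

lemma nonpos_of_forall_pos_le_mul {a b : ℝ} (h : ∀ c : ℝ, 0 < c → a ≤ c * b) : a ≤ 0 := by
  have hlim : Tendsto (fun c : ℝ => c * b) (𝓝[>] 0) (𝓝 0) := by
    simpa using ((continuous_mul_const b).tendsto 0).mono_left nhdsWithin_le_nhds
  exact ge_of_tendsto hlim (eventually_nhdsWithin_of_forall h)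

section ScaleInvariant

variable {E : Type*} [SeminormedAddCommGroup E] [NormedSpace ℝ E]

def ScaleInvariantOn {β : Type*} (δ : E → β) (S : Set E) : Prop :=
  ∀ c : ℝ, 0 < c → ∀ x ∈ S, δ (c • x) = δ x

lemma ScaleInvariantOn.norm_sub_le_mul {F : Type*} [SeminormedAddCommGroup F]
    {S : Set E} {δ : E → F} {K : ℝ} (hinv : ScaleInvariantOn δ S)
    (hS : ∀ c : ℝ, 0 < c → ∀ x ∈ S, c • x ∈ S)
    (hLip : ∀ x ∈ S, ∀ y ∈ S, ‖δ x - δ y‖ ≤ K * ‖x - y‖)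
    {x y : E} (hx : x ∈ S) (hy : y ∈ S) {c : ℝ} (hc : 0 < c) :
    ‖δ x - δ y‖ ≤ c * (K * ‖x - y‖) :=
  calc ‖δ x - δ y‖ = ‖δ (c • x) - δ (c • y)‖ := by rw [hinv c hc x hx, hinv c hc y hy]
    _ ≤ K * ‖c • x - c • y‖ := hLip _ (hS c hc x hx) _ (hS c hc y hy)
    _ = c * (K * ‖x - y‖) := by
      rw [← smul_sub, norm_smul, Real.norm_of_nonneg hc.le]
      ring

end ScaleInvariant

theorem scale_invariant_lipschitz_const_general
    {E F : Type*} [NormedAddCommGroup E] [NormedSpace ℝ E]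
    [NormedAddCommGroup F]
    (S : Set E) (hS : ∀ c : ℝ, 0 < c → ∀ x ∈ S, c • x ∈ S)
    (δ : E → F) (K : ℝ)
    (hLip : ∀ x ∈ S, ∀ y ∈ S, ‖δ x - δ y‖ ≤ K * ‖x - y‖)
    (hinv : ∀ c : ℝ, 0 < c → ∀ x ∈ S, δ (c • x) = δ x) :
    ∀ x ∈ S, ∀ y ∈ S, δ x = δ y := by
  intro x hx y hy
  have hdist : ‖δ x - δ y‖ ≤ 0 :=
    nonpos_of_forall_pos_le_mul fun c hc =>
      ScaleInvariantOn.norm_sub_le_mul hinv hS hLip hx hy hc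
  exact sub_eq_zero.mp (norm_le_zero_iff.mp hdist)

/-- A scale-invariant function that is Lipschitz on a set closed under positive
scalar multiplication must be constant on that set. -/
theorem scale_invariant_lipschitz_const
    {E F : Type*} [NormedAddCommGroup E] [NormedSpace ℝ E]
    [NormedAddCommGroup F] [NormedSpace ℝ F]
    (S : Set E) (hS : ∀ c : ℝ, 0 < c → ∀ x ∈ S, c • x ∈ S)
    (δ : E → F) (K : ℝ) (hK : 0 ≤ K)
    (hLip : ∀ x ∈ S, ∀ y ∈ S, ‖δ x - δ y‖ ≤ K * ‖x - y‖)
    (hinv : ∀ c : ℝ, 0 < c → ∀ x ∈ S, δ (c • x) = δ x) :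
    ∀ x ∈ S, ∀ y ∈ S, δ x = δ y :=
  scale_invariant_lipschitz_const_general S hS δ K hLip hinv
end

section
/- Let p, q be positive natural numbers, let ā ≥ 0, and let φ_q denote the standard Gaussian density on EuclideanSpace ℝ (Fin q), i.e. φ_q(z) = (2π)^{−q/2} · exp(−‖z‖²/2). Let γ : EuclideanSpace ℝ (Fin q) → EuclideanSpace ℝ (Fin p) be measurable with ‖γ(υ)‖ ≤ ā for all υ. Then the function γ^B(y) = ∫ γ(υ) · φ_q(υ − y) dυ (Bochner integral with respect to Lebesgue measure) is Lipschitz with constant ā·√p: ‖γ^B(y) − γ^B(ỹ)‖ ≤ ā·√p·‖y − ỹ‖ for all y, ỹ. -/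
/-!
Write `γB y = ∫ φ (υ - y) • γ υ` with `φ` the standard Gaussian density. After a translation,
`‖γB y - γB ỹ‖ ≤ ā ∫ |φ (υ + h) - φ υ| dυ` with `h = ỹ - y`. The fundamental theorem of calculus
along the segment `[υ, υ + h]` and Tonelli bound this `L¹` distance by `∫ |Dφ(υ) h| dυ`, which is
`E |⟪Z, h⟫|` for a standard Gaussian vector `Z`. As `⟪Z, h⟫` is centred with variance `‖h‖²`,
`E |⟪Z, h⟫| ≤ ‖h‖`; so `γB` is even `ā`-Lipschitz, and `√p ≥ 1`.
-/

open MeasureTheory ProbabilityTheory Real Module Set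

lemma enorm_sub_le_lintegral_enorm_fderiv {E F : Type*} [NormedAddCommGroup E] [NormedSpace ℝ E]
    [NormedAddCommGroup F] [NormedSpace ℝ F] [CompleteSpace F] {f : E → F}
    (hf : ContDiff ℝ 1 f) (x h : E) :
    ‖f (x + h) - f x‖ₑ ≤ ∫⁻ t in Ioc (0 : ℝ) 1, ‖fderiv ℝ f (x + t • h) h‖ₑ := by
  have hderiv : ∀ t ∈ uIcc (0 : ℝ) 1,
      HasDerivAt (fun s : ℝ ↦ f (x + s • h)) (fderiv ℝ f (x + t • h) h) t := by
    intro t _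
    have hline : HasDerivAt (fun s : ℝ ↦ x + s • h) h t :=
      ((hasDerivAt_id t).smul_const h).const_add x |>.congr_deriv (one_smul ℝ h)
    exact (hf.differentiable one_ne_zero _).hasFDerivAt.comp_hasDerivAt t hline
  have hcont : Continuous fun t : ℝ ↦ fderiv ℝ f (x + t • h) h :=
    ((hf.continuous_fderiv one_ne_zero).comp (by fun_prop)).clm_apply continuous_const
  calc ‖f (x + h) - f x‖ₑ
      = ‖∫ t in (0 : ℝ)..1, fderiv ℝ f (x + t • h) h‖ₑ := by
        rw [intervalIntegral.integral_eq_sub_of_hasDerivAt hderiv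
          (hcont.intervalIntegrable 0 1)]
        simp
    _ ≤ ∫⁻ t in Ioc (0 : ℝ) 1, ‖fderiv ℝ f (x + t • h) h‖ₑ := by
        rw [intervalIntegral.integral_of_le zero_le_one]
        exact enorm_integral_le_lintegral_enorm _

lemma lintegral_enorm_sub_le_lintegral_enorm_fderiv {E F : Type*} [NormedAddCommGroup E]
    [NormedSpace ℝ E] [MeasurableSpace E] [BorelSpace E] [SecondCountableTopology E]
    [NormedAddCommGroup F] [NormedSpace ℝ F] [CompleteSpace F]
    {μ : Measure E} [μ.IsAddRightInvariant] [SFinite μ] {f : E → F}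
    (hf : ContDiff ℝ 1 f) (h : E) :
    ∫⁻ x, ‖f (x + h) - f x‖ₑ ∂μ ≤ ∫⁻ x, ‖fderiv ℝ f x h‖ₑ ∂μ := by
  have hmeas : Measurable fun p : E × ℝ ↦ ‖fderiv ℝ f (p.1 + p.2 • h) h‖ₑ :=
    (((hf.continuous_fderiv one_ne_zero).comp (by fun_prop)).clm_apply
      continuous_const).enorm.measurable
  calc ∫⁻ x, ‖f (x + h) - f x‖ₑ ∂μ
      ≤ ∫⁻ x, (∫⁻ t in Ioc (0 : ℝ) 1, ‖fderiv ℝ f (x + t • h) h‖ₑ) ∂μ :=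
        lintegral_mono fun x ↦ enorm_sub_le_lintegral_enorm_fderiv hf x h
    _ = ∫⁻ t in Ioc (0 : ℝ) 1, ∫⁻ x, ‖fderiv ℝ f (x + t • h) h‖ₑ ∂μ :=
        lintegral_lintegral_swap hmeas.aemeasurable
    _ = ∫⁻ x, ‖fderiv ℝ f x h‖ₑ ∂μ := by
        simp_rw [lintegral_add_right_eq_self (fun x ↦ ‖fderiv ℝ f x h‖ₑ)]
        simp

section StdGaussian

variable {V : Type*} [NormedAddCommGroup V] [InnerProductSpace ℝ V]

variable (V) in
noncomputable def stdGaussianDensity (v : V) : ℝ :=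
  (2 * π) ^ (-(finrank ℝ V : ℝ) / 2) * exp (-‖v‖ ^ 2 / 2)

lemma stdGaussianDensity_nonneg (v : V) : 0 ≤ stdGaussianDensity V v := by
  unfold stdGaussianDensity; positivity

@[fun_prop]
lemma continuous_stdGaussianDensity : Continuous (stdGaussianDensity V) := by
  unfold stdGaussianDensity; fun_prop

lemma hasFDerivAt_stdGaussianDensity (x : V) :
    HasFDerivAt (stdGaussianDensity V) (-stdGaussianDensity V x • innerSL ℝ x) x := by
  have := (((hasFDerivAt_id x).norm_sq.const_mul (-1 / 2 : ℝ)).exp.const_mul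
    ((2 * π) ^ (-(finrank ℝ V : ℝ) / 2)))
  refine (this.congr_fderiv ?_).congr_of_eventuallyEq (.of_forall fun y ↦ ?_)
  · ext v
    simp [stdGaussianDensity]
    ring_nf
  · simp only [stdGaussianDensity, id]
    ring_nf

lemma contDiff_stdGaussianDensity : ContDiff ℝ 1 (stdGaussianDensity V) :=
  contDiff_const.mul ((contDiff_norm_sq ℝ).neg.div_const 2).exp

variable [FiniteDimensional ℝ V] [MeasurableSpace V] [BorelSpace V]

lemma integrable_stdGaussianDensity : Integrable (stdGaussianDensity V) := by
  have h := (GaussianFourier.integrable_cexp_neg_mul_sq_norm_add (V := V) (b := 1 / 2)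
    (by norm_num) 0 0).norm.const_mul ((2 * π) ^ (-(finrank ℝ V : ℝ) / 2))
  convert h using 2 with v
  simp [stdGaussianDensity, Complex.norm_exp]
  left
  rw [← Complex.ofReal_pow, Complex.ofReal_re]
  ring

lemma stdGaussian_eq_withDensity :
    stdGaussian V = volume.withDensity (fun v ↦ ENNReal.ofReal (stdGaussianDensity V v)) := by
  have := isFiniteMeasure_withDensity_ofReal (integrable_stdGaussianDensity (V := V)).2
  refine Measure.ext_of_charFun (funext fun t ↦ ?_)
  rw [charFun_stdGaussian, charFun_apply, integral_withDensity_eq_integral_toReal_smul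
    (by fun_prop) (Filter.Eventually.of_forall fun _ ↦ ENNReal.ofReal_lt_top)]
  simp_rw [ENNReal.toReal_ofReal (stdGaussianDensity_nonneg _), stdGaussianDensity]
  have hfourier := GaussianFourier.integral_cexp_neg_mul_sq_norm_add (V := V) (b := 1 / 2)
    (by norm_num) Complex.I t
  have hcpow : (π / (1 / 2) : ℂ) ^ ((finrank ℝ V : ℂ) / 2)
      = ((2 * π) ^ ((finrank ℝ V : ℝ) / 2) : ℝ) := by
    rw [Complex.ofReal_cpow (by positivity)]
    push_cast
    ring_nf
  have hinv : (2 * π) ^ (-(finrank ℝ V : ℝ) / 2) * (2 * π) ^ ((finrank ℝ V : ℝ) / 2) = 1 := by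
    rw [← Real.rpow_add (by positivity), neg_div, neg_add_cancel, Real.rpow_zero]
  have hintegrand : ∀ x : V, ((2 * π) ^ (-(finrank ℝ V : ℝ) / 2) * rexp (-‖x‖ ^ 2 / 2)) •
      Complex.exp (inner ℝ x t * Complex.I) = ((2 * π) ^ (-(finrank ℝ V : ℝ) / 2) : ℝ) *
      Complex.exp (-(1 / 2) * ‖x‖ ^ 2 + Complex.I * inner ℝ t x) := by
    intro x
    rw [Complex.real_smul, Complex.ofReal_mul, Complex.ofReal_exp, mul_assoc, ← Complex.exp_add,
      real_inner_comm]
    push_cast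
    ring_nf
  simp_rw [hintegrand]
  rw [integral_const_mul, hfourier, hcpow, ← mul_assoc, ← Complex.ofReal_mul, hinv,
    Complex.ofReal_one, one_mul, Complex.I_sq]
  ring_nf

lemma lintegral_enorm_strongDual_stdGaussian_le (L : StrongDual ℝ V) :
    ∫⁻ v, ‖L v‖ₑ ∂stdGaussian V ≤ ‖L‖ₑ := by
  have hL : MemLp L 2 (stdGaussian V) := IsGaussian.memLp_dual _ L 2 (by simp)
  have hsq : ∫ v, L v ^ 2 ∂stdGaussian V = ‖L‖ ^ 2 := by
    rw [← variance_dual_stdGaussian L, variance_of_integral_eq_zero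
      hL.aestronglyMeasurable.aemeasurable (integral_strongDual_stdGaussian L)]
  -- `0 ≤ Var |L| = E[L²] - (E|L|)²`
  have hvar := variance_eq_sub hL.abs
  simp only [Pi.pow_apply, Pi.abs_apply, sq_abs, hsq] at hvar
  have hmean : ∫ v, |L v| ∂stdGaussian V ≤ ‖L‖ :=
    (abs_le_of_sq_le_sq' (by linarith [variance_nonneg (|⇑L|) (stdGaussian V)])
      (norm_nonneg L)).2
  rw [← ofReal_integral_norm_eq_lintegral_enorm (hL.integrable one_le_two), ← ofReal_norm]
  exact ENNReal.ofReal_le_ofReal hmean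

lemma lintegral_enorm_stdGaussianDensity_add_sub_le (h : V) :
    ∫⁻ x, ‖stdGaussianDensity V (x + h) - stdGaussianDensity V x‖ₑ ≤ ‖h‖ₑ := calc
  _ ≤ ∫⁻ x, ‖fderiv ℝ (stdGaussianDensity V) x h‖ₑ :=
      lintegral_enorm_sub_le_lintegral_enorm_fderiv contDiff_stdGaussianDensity h
  _ = ∫⁻ x, ENNReal.ofReal (stdGaussianDensity V x) * ‖innerSL ℝ h x‖ₑ := by
      congr 1 with x
      rw [(hasFDerivAt_stdGaussianDensity x).fderiv]
      simp [enorm_mul, Real.enorm_of_nonneg (stdGaussianDensity_nonneg x), real_inner_comm]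
  _ = ∫⁻ x, ‖innerSL ℝ h x‖ₑ ∂stdGaussian V := by
      rw [stdGaussian_eq_withDensity, lintegral_withDensity_eq_lintegral_mul₀ (by fun_prop)
        (by fun_prop)]
      rfl
  _ ≤ ‖h‖ₑ := by
      simpa only [← ofReal_norm, innerSL_apply_norm]
        using lintegral_enorm_strongDual_stdGaussian_le (innerSL ℝ h)

variable {F : Type*} [NormedAddCommGroup F] [NormedSpace ℝ F]

noncomputable def gaussianSmoothing (γ : V → F) (y : V) : F :=
  ∫ υ, stdGaussianDensity V (υ - y) • γ υ

lemma lipschitzWith_gaussianSmoothing {γ : V → F} {a : NNReal}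
    (hγ : AEStronglyMeasurable γ) (hbd : ∀ v, ‖γ v‖ ≤ a) :
    LipschitzWith a (gaussianSmoothing γ) := by
  have hint (y : V) : Integrable fun υ ↦ stdGaussianDensity V (υ - y) • γ υ :=
    (integrable_stdGaussianDensity.comp_sub_right y).smul_of_top_left
      (memLp_top_of_bound hγ a (.of_forall hbd))
  intro y y'
  rw [edist_eq_enorm_sub, edist_eq_enorm_sub, gaussianSmoothing, gaussianSmoothing,
    ← integral_sub (hint y) (hint y')]
  calc _ ≤ ∫⁻ υ, ‖stdGaussianDensity V (υ - y) • γ υ - stdGaussianDensity V (υ - y') • γ υ‖ₑ :=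
        enorm_integral_le_lintegral_enorm _
    _ ≤ ∫⁻ υ, ‖stdGaussianDensity V (υ - y) - stdGaussianDensity V (υ - y')‖ₑ * a := by
        refine lintegral_mono fun υ ↦ ?_
        rw [← sub_smul, enorm_smul]
        gcongr
        exact enorm_le_coe.2 (hbd υ)
    _ = (∫⁻ υ, ‖stdGaussianDensity V (υ + (y' - y)) - stdGaussianDensity V υ‖ₑ) * a := by
        rw [lintegral_mul_const' _ _ ENNReal.coe_ne_top,
          ← lintegral_add_right_eq_self _ y']
        simp only [add_sub_cancel_right, add_sub_assoc]
    _ ≤ a * ‖y - y'‖ₑ := by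
        rw [mul_comm, enorm_sub_rev]
        gcongr
        exact lintegral_enorm_stdGaussianDensity_add_sub_le _

end StdGaussian

theorem bagged_estimator_lipschitz_general
    (p q : ℕ) (hp : 0 < p) (abar : ℝ) (habar : 0 ≤ abar)
    (γ : EuclideanSpace ℝ (Fin q) → EuclideanSpace ℝ (Fin p))
    (hγmeas : Measurable γ) (hγbd : ∀ υ, ‖γ υ‖ ≤ abar)
    (γB : EuclideanSpace ℝ (Fin q) → EuclideanSpace ℝ (Fin p))
    (hγB : ∀ y, γB y =
      ∫ υ, ((2 * Real.pi) ^ (-(q : ℝ) / 2) * Real.exp (-‖υ - y‖ ^ 2 / 2)) • γ υ) :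
    ∀ y ytilde : EuclideanSpace ℝ (Fin q),
      ‖γB y - γB ytilde‖ ≤ abar * Real.sqrt p * ‖y - ytilde‖ := by
  intro y ytilde
  have hγB_eq : γB = gaussianSmoothing γ := funext fun y ↦ by
    simp [hγB, gaussianSmoothing, stdGaussianDensity]
  have hlip : LipschitzWith abar.toNNReal γB := hγB_eq ▸
    lipschitzWith_gaussianSmoothing hγmeas.aestronglyMeasurable
      fun υ ↦ (hγbd υ).trans (Real.le_coe_toNNReal abar)
  have hsqrt : 1 ≤ Real.sqrt p := Real.one_le_sqrt.2 (by exact_mod_cast hp)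
  calc ‖γB y - γB ytilde‖ ≤ abar * ‖y - ytilde‖ := by
        simpa [dist_eq_norm, habar] using hlip.dist_le_mul y ytilde
    _ ≤ abar * Real.sqrt p * ‖y - ytilde‖ := by
        rw [mul_assoc]
        gcongr
        exact le_mul_of_one_le_left (norm_nonneg _) hsqrt

/-- Bagging (Gaussian convolution) of a bounded measurable estimator yields a
Lipschitz function with constant `abar * √p`. -/
theorem bagged_estimator_lipschitz
    (p q : ℕ) (hp : 0 < p) (hq : 0 < q) (abar : ℝ) (habar : 0 ≤ abar)
    (γ : EuclideanSpace ℝ (Fin q) → EuclideanSpace ℝ (Fin p))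
    (hγmeas : Measurable γ) (hγbd : ∀ υ, ‖γ υ‖ ≤ abar)
    (γB : EuclideanSpace ℝ (Fin q) → EuclideanSpace ℝ (Fin p))
    (hγB : ∀ y, γB y =
      ∫ υ, ((2 * Real.pi) ^ (-(q : ℝ) / 2) * Real.exp (-‖υ - y‖ ^ 2 / 2)) • γ υ) :
    ∀ y ytilde : EuclideanSpace ℝ (Fin q),
      ‖γB y - γB ytilde‖ ≤ abar * Real.sqrt p * ‖y - ytilde‖ :=
  bagged_estimator_lipschitz_general p q hp abar habar γ hγmeas hγbd γB hγB
end

section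
/- Let (Θ, 𝒜, π) be a probability space, let p be a positive natural number and r̄ ≥ 0, and let r : Θ → EuclideanSpace ℝ (Fin p) be measurable with ‖r(θ)‖ ≤ r̄ for all θ. For a bounded measurable function Q : Θ → ℝ define the quasi-Bayes posterior mean δ(Q) = (∫ exp(−Q(θ)/2) · r(θ) dπ(θ)) / (∫ exp(−Q(θ)/2) dπ(θ)). Then for any two bounded measurable functions Q, Q' : Θ → ℝ, ‖δ(Q) − δ(Q')‖ ≤ (1/2) · r̄ · √p · sup_{θ∈Θ} |Q(θ) − Q'(θ)|. -/
/-!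
`δ Q` is the mean of `r` under the tilted measure `π.tilted (-Q / 2)`, and the measure for `Q` is
the tilt of `ν = π.tilted (-Q' / 2)` by `X = (Q' - Q) / 2`, where `|X| ≤ S / 2` for
`S = sup |Q - Q'|`. Along the path `s ↦ ν.tilted (s * X)`, `s ∈ [0, 1]`, the derivative of the
mean of `r` is the covariance of `X` and `r` under the tilted probability measure, of norm at most
`sup ‖r‖ · E|X - E X| ≤ r̄ · √Var X ≤ r̄ · S / 2` (Cauchy–Schwarz and Popoviciu's inequality).
The mean value inequality gives the bound `r̄ S / 2`, and `1 ≤ √p`.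
-/

open MeasureTheory

section Tilted

open ProbabilityTheory Real

variable {Ω : Type*} {mΩ : MeasurableSpace Ω} {μ : Measure Ω}
  {E : Type*} [NormedAddCommGroup E] [NormedSpace ℝ E]

lemma integral_abs_sub_integral_le_sqrt_variance [IsProbabilityMeasure μ] {X : Ω → ℝ}
    (hX : MemLp X 2 μ) : ∫ ω, |X ω - μ[X]| ∂μ ≤ √(Var[X; μ]) := by
  have hY : MemLp (fun ω ↦ |X ω - μ[X]|) 2 μ := (hX.sub (memLp_const _)).abs
  have hvar := variance_nonneg (fun ω ↦ |X ω - μ[X]|) μ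
  rw [variance_eq_sub hY] at hvar
  simp only [Pi.pow_apply, sq_abs] at hvar
  rw [variance_eq_integral hX.aemeasurable]
  exact Real.le_sqrt_of_sq_le (by linarith)

lemma integral_abs_sub_integral_le [IsProbabilityMeasure μ] {X : Ω → ℝ} {M : ℝ}
    (hX : AEMeasurable X μ) (hXM : ∀ ω, |X ω| ≤ M) : ∫ ω, |X ω - μ[X]| ∂μ ≤ M := by
  have hM : 0 ≤ M := (abs_nonneg _).trans (hXM (nonempty_of_isProbabilityMeasure μ).some)
  have hX2 : MemLp X 2 μ := memLp_of_bounded (a := -M) (b := M)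
    (ae_of_all _ fun ω ↦ abs_le.mp (hXM ω)) hX.aestronglyMeasurable 2
  calc ∫ ω, |X ω - μ[X]| ∂μ ≤ √(Var[X; μ]) := integral_abs_sub_integral_le_sqrt_variance hX2
    _ ≤ √(((M - -M) / 2) ^ 2) := by
        gcongr
        exact variance_le_sq_of_bounded (ae_of_all _ fun ω ↦ abs_le.mp (hXM ω)) hX
    _ = M := by rw [sub_neg_eq_add, ← two_mul, mul_div_cancel_left₀ _ two_ne_zero, sqrt_sq hM]

lemma norm_integral_smul_sub_integral_smul_integral_le [IsProbabilityMeasure μ] {X : Ω → ℝ}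
    {r : Ω → E} {M R : ℝ} (hX : AEMeasurable X μ) (hXM : ∀ ω, |X ω| ≤ M)
    (hr : AEStronglyMeasurable r μ) (hrR : ∀ ω, ‖r ω‖ ≤ R) :
    ‖∫ ω, X ω • r ω ∂μ - μ[X] • ∫ ω, r ω ∂μ‖ ≤ M * R := by
  have hR : 0 ≤ R := (norm_nonneg _).trans (hrR (nonempty_of_isProbabilityMeasure μ).some)
  have hXint : Integrable X μ :=
    .of_bound hX.aestronglyMeasurable M (ae_of_all _ fun ω ↦ by simpa using hXM ω)
  have hrint : Integrable r μ := .of_bound hr R (ae_of_all _ hrR)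
  have hXrint : Integrable (fun ω ↦ X ω • r ω) μ :=
    hrint.bdd_smul M hX.aestronglyMeasurable (ae_of_all _ fun ω ↦ by simpa using hXM ω)
  have hcentre : ∫ ω, X ω • r ω ∂μ - μ[X] • ∫ ω, r ω ∂μ = ∫ ω, (X ω - μ[X]) • r ω ∂μ := by
    simp_rw [sub_smul]
    rw [integral_sub hXrint (hrint.fun_smul _), integral_smul]
  calc ‖∫ ω, X ω • r ω ∂μ - μ[X] • ∫ ω, r ω ∂μ‖
      ≤ ∫ ω, |X ω - μ[X]| * R ∂μ := by
        rw [hcentre]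
        refine norm_integral_le_of_norm_le ((hXint.sub (integrable_const _)).abs.mul_const R)
          (ae_of_all _ fun ω ↦ ?_)
        rw [norm_smul, Real.norm_eq_abs]
        exact mul_le_mul_of_nonneg_left (hrR ω) (abs_nonneg _)
    _ = (∫ ω, |X ω - μ[X]| ∂μ) * R := integral_mul_const _ _
    _ ≤ M * R := mul_le_mul_of_nonneg_right (integral_abs_sub_integral_le hX hXM) hR

lemma hasDerivAt_integral_exp_mul_smul [IsFiniteMeasure μ] {X : Ω → ℝ} {r : Ω → E} {M R : ℝ}
    (hX : AEMeasurable X μ) (hXM : ∀ ω, |X ω| ≤ M)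
    (hr : AEStronglyMeasurable r μ) (hrR : ∀ ω, ‖r ω‖ ≤ R) (t : ℝ) :
    HasDerivAt (fun s ↦ ∫ ω, exp (s * X ω) • r ω ∂μ)
      (∫ ω, (X ω * exp (t * X ω)) • r ω ∂μ) t := by
  have hexp (s : ℝ) : AEStronglyMeasurable (fun ω ↦ exp (s * X ω)) μ := aemeasurable_exp_mul s hX
  have hexp_le {s : ℝ} (hs : s ∈ Metric.ball t 1) (ω : Ω) :
      exp (s * X ω) ≤ exp ((|t| + 1) * M) := by
    have hs' : |s| ≤ |t| + 1 := by
      have := abs_sub_abs_le_abs_sub s t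
      rw [Metric.mem_ball, Real.dist_eq] at hs
      linarith
    refine exp_le_exp.mpr ?_
    calc s * X ω ≤ |s * X ω| := le_abs_self _
      _ = |s| * |X ω| := abs_mul _ _
      _ ≤ (|t| + 1) * M := mul_le_mul hs' (hXM ω) (abs_nonneg _) (by positivity)
  refine (hasDerivAt_integral_of_dominated_loc_of_deriv_le (Metric.ball_mem_nhds t one_pos)
    (F := fun s ω ↦ exp (s * X ω) • r ω) (F' := fun s ω ↦ (X ω * exp (s * X ω)) • r ω)
    (bound := fun _ ↦ M * exp ((|t| + 1) * M) * R)
    (.of_forall fun s ↦ (hexp s).smul hr) ?_ ((hX.aestronglyMeasurable.mul (hexp t)).smul hr)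
    (ae_of_all _ fun ω s hs ↦ ?_) (integrable_const _)
    (ae_of_all _ fun ω s _ ↦ ?_)).2
  · refine .of_bound ((hexp t).smul hr) (exp ((|t| + 1) * M) * R) (ae_of_all _ fun ω ↦ ?_)
    rw [norm_smul, Real.norm_of_nonneg (exp_pos _).le]
    exact mul_le_mul (hexp_le (Metric.mem_ball_self one_pos) ω) (hrR ω) (norm_nonneg _)
      (exp_pos _).le
  · rw [norm_smul, norm_mul, Real.norm_eq_abs, Real.norm_of_nonneg (exp_pos _).le]
    have hM : 0 ≤ M := (abs_nonneg _).trans (hXM ω)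
    exact mul_le_mul (mul_le_mul (hXM ω) (hexp_le hs ω) (exp_pos _).le hM) (hrR ω)
      (norm_nonneg _) (by positivity)
  · simpa [mul_comm] using ((hasDerivAt_mul_const (X ω)).exp).smul_const (r ω)

lemma integral_tilted_eq_inv_smul (f : Ω → ℝ) (g : Ω → E) :
    ∫ ω, g ω ∂μ.tilted f = (∫ ω, exp (f ω) ∂μ)⁻¹ • ∫ ω, exp (f ω) • g ω ∂μ := by
  simp_rw [integral_tilted, div_eq_inv_mul, mul_smul]
  exact integral_smul _ _

lemma integrable_exp_mul_of_abs_le [IsFiniteMeasure μ] {X : Ω → ℝ} {M : ℝ}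
    (hX : AEMeasurable X μ) (hXM : ∀ ω, |X ω| ≤ M) (t : ℝ) :
    Integrable (fun ω ↦ exp (t * X ω)) μ :=
  integrable_exp_mul_of_mem_Icc hX (ae_of_all _ fun ω ↦ abs_le.mp (hXM ω))

lemma hasDerivAt_integral_tilted_mul [IsFiniteMeasure μ] [NeZero μ] {X : Ω → ℝ} {r : Ω → E}
    {M R : ℝ} (hX : AEMeasurable X μ) (hXM : ∀ ω, |X ω| ≤ M)
    (hr : AEStronglyMeasurable r μ) (hrR : ∀ ω, ‖r ω‖ ≤ R) (t : ℝ) :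
    HasDerivAt (fun s ↦ ∫ ω, r ω ∂μ.tilted (s * X ·))
      (∫ ω, X ω • r ω ∂μ.tilted (t * X ·)
        - (∫ ω, X ω ∂μ.tilted (t * X ·)) • ∫ ω, r ω ∂μ.tilted (t * X ·)) t := by
  have hmgf : HasDerivAt (mgf X μ) (μ[fun ω ↦ X ω * exp (t * X ω)]) t :=
    hasDerivAt_mgf (by simp [integrableExpSet, integrable_exp_mul_of_abs_le hX hXM])
  have hmgf_ne : mgf X μ t ≠ 0 :=
    (mgf_pos' (NeZero.ne μ) (integrable_exp_mul_of_abs_le hX hXM t)).ne'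
  convert (hmgf.inv hmgf_ne).smul (hasDerivAt_integral_exp_mul_smul hX hXM hr hrR t) using 1
  · funext s
    exact integral_tilted_eq_inv_smul _ _
  have hXr : ∫ ω, exp (t * X ω) • X ω • r ω ∂μ = ∫ ω, (X ω * exp (t * X ω)) • r ω ∂μ := by
    simp_rw [smul_smul, mul_comm]
  have hXe : ∫ ω, exp (t * X ω) • X ω ∂μ = μ[fun ω ↦ X ω * exp (t * X ω)] := by
    simp_rw [smul_eq_mul, mul_comm]
  simp only [integral_tilted_eq_inv_smul, hXr, hXe, Pi.inv_apply, ← mgf.eq_1]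
  module

lemma norm_integral_tilted_sub_integral_le [IsProbabilityMeasure μ] {X : Ω → ℝ} {r : Ω → E}
    {M R : ℝ} (hX : AEMeasurable X μ) (hXM : ∀ ω, |X ω| ≤ M)
    (hr : AEStronglyMeasurable r μ) (hrR : ∀ ω, ‖r ω‖ ≤ R) :
    ‖∫ ω, r ω ∂μ.tilted X - ∫ ω, r ω ∂μ‖ ≤ M * R := by
  have hF1 : ∫ ω, r ω ∂μ.tilted (1 * X ·) = ∫ ω, r ω ∂μ.tilted X := by simp
  have hF0 : ∫ ω, r ω ∂μ.tilted (0 * X ·) = ∫ ω, r ω ∂μ := by simp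
  rw [← hF1, ← hF0]
  refine norm_image_sub_le_of_norm_deriv_le_segment_01'
    (fun s _ ↦ (hasDerivAt_integral_tilted_mul hX hXM hr hrR s).hasDerivWithinAt) fun s _ ↦ ?_
  have := isProbabilityMeasure_tilted (integrable_exp_mul_of_abs_le hX hXM s)
  have hac := tilted_absolutelyContinuous μ (s * X ·)
  exact norm_integral_smul_sub_integral_smul_integral_le (hX.mono_ac hac) hXM (hr.mono_ac hac) hrR

end Tilted

/-- The quasi-Bayes posterior mean is Lipschitz in the objective function `Q`
with constant `(1/2) * rbar * √p`. -/
theorem quasiBayes_lipschitz_in_objective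
    {Θ : Type*} [MeasurableSpace Θ] (π : Measure Θ) [IsProbabilityMeasure π]
    (p : ℕ) (hp : 0 < p) (rbar : ℝ) (hrbar : 0 ≤ rbar)
    (r : Θ → EuclideanSpace ℝ (Fin p)) (hrmeas : Measurable r)
    (hrbd : ∀ θ, ‖r θ‖ ≤ rbar)
    (δ : (Θ → ℝ) → EuclideanSpace ℝ (Fin p))
    (hδ : ∀ Q : Θ → ℝ, δ Q =
      (∫ θ, Real.exp (-Q θ / 2) ∂π)⁻¹ • ∫ θ, Real.exp (-Q θ / 2) • r θ ∂π) :
    ∀ Q Q' : Θ → ℝ, Measurable Q → Measurable Q' →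
      (∃ MQ : ℝ, ∀ θ, |Q θ| ≤ MQ) → (∃ MQ' : ℝ, ∀ θ, |Q' θ| ≤ MQ') →
      ‖δ Q - δ Q'‖ ≤ (1 / 2) * rbar * Real.sqrt p * ⨆ θ, |Q θ - Q' θ| := by
  rintro Q Q' hQ hQ' ⟨MQ, hMQ⟩ ⟨MQ', hMQ'⟩
  set S := ⨆ θ, |Q θ - Q' θ|
  have hS (θ : Θ) : |Q θ - Q' θ| ≤ S :=
    le_ciSup ⟨MQ + MQ', by
      rintro _ ⟨θ, rfl⟩
      exact (abs_sub _ _).trans (add_le_add (hMQ θ) (hMQ' θ))⟩ θ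
  have hδ_tilted (Q : Θ → ℝ) : δ Q = ∫ θ, r θ ∂π.tilted (-Q · / 2) :=
    (hδ Q).trans (integral_tilted_eq_inv_smul _ _).symm
  have hint : Integrable (fun θ ↦ Real.exp (-Q' θ / 2)) π :=
    (integrable_exp_mul_of_abs_le hQ'.aemeasurable hMQ' (-1 / 2)).congr
      (ae_of_all _ fun θ ↦ by ring_nf)
  have htilt : π.tilted (-Q · / 2) = (π.tilted (-Q' · / 2)).tilted fun θ ↦ (Q' θ - Q θ) / 2 := by
    rw [tilted_tilted hint]
    congr with θ
    simp only [Pi.add_apply]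
    ring
  have := isProbabilityMeasure_tilted hint
  have hsqrt : 1 ≤ Real.sqrt p := Real.one_le_sqrt.mpr (by exact_mod_cast hp)
  rw [hδ_tilted, hδ_tilted, htilt]
  calc _ ≤ S / 2 * rbar :=
        norm_integral_tilted_sub_integral_le (by fun_prop) (fun θ ↦ by
          rw [abs_div, abs_two, abs_sub_comm]; linarith [hS θ]) hrmeas.aestronglyMeasurable hrbd
    _ = 1 / 2 * rbar * 1 * S := by ring
    _ ≤ 1 / 2 * rbar * Real.sqrt p * S := by
        have hS0 : 0 ≤ S := Real.iSup_nonneg fun θ ↦ abs_nonneg _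
        gcongr
end

section
/- Let θ₁, θ₂, a, b be real numbers with a ≠ b. For C ∈ ℝ define δ_C = (θ₁·exp(−a²/2 − (b−C)²/2) + θ₂·exp(−b²/2 − (a−C)²/2)) / (exp(−a²/2 − (b−C)²/2) + exp(−b²/2 − (a−C)²/2)). Then as C → ∞, δ_C converges to θ₁ if a < b, and to θ₂ if b < a. -/
/-! The two posterior weights differ by the likelihood ratio `exp ((a - b) * C)`, so as `C → ∞`
all posterior mass moves to `θ₁` when `a < b` and to `θ₂` when `b < a`. -/

open Filter Real Topology

theorem tendsto_weighted_mean_of_tendsto_div_zero {α : Type*} {l : Filter α} {w₁ w₂ : α → ℝ}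
    (hw₁ : ∀ x, w₁ x ≠ 0) (hratio : Tendsto (fun x => w₂ x / w₁ x) l (𝓝 0)) (θ₁ θ₂ : ℝ) :
    Tendsto (fun x => (θ₁ * w₁ x + θ₂ * w₂ x) / (w₁ x + w₂ x)) l (𝓝 θ₁) := by
  have hform : ∀ x, (θ₁ + θ₂ * (w₂ x / w₁ x)) / (1 + w₂ x / w₁ x) =
      (θ₁ * w₁ x + θ₂ * w₂ x) / (w₁ x + w₂ x) := fun x => by
    have := hw₁ x
    field_simp
  have hlim : Tendsto (fun x => (θ₁ + θ₂ * (w₂ x / w₁ x)) / (1 + w₂ x / w₁ x)) l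
      (𝓝 ((θ₁ + θ₂ * 0) / (1 + 0))) :=
    ((tendsto_const_nhds.add (tendsto_const_nhds.mul hratio)).div
      (tendsto_const_nhds.add hratio) (by norm_num))
  simpa only [hform, mul_zero, add_zero, div_one] using hlim

theorem exp_gaussian_cross_div (a b C : ℝ) :
    exp (-b ^ 2 / 2 - (a - C) ^ 2 / 2) / exp (-a ^ 2 / 2 - (b - C) ^ 2 / 2) =
      exp ((a - b) * C) := by
  rw [← exp_sub]
  ring_nf

theorem tendsto_exp_sub_mul_atTop_of_lt {a b : ℝ} (h : a < b) :
    Tendsto (fun C : ℝ => exp ((a - b) * C)) atTop (𝓝 0) :=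
  tendsto_exp_atBot.comp (tendsto_id.const_mul_atTop_of_neg (sub_neg.2 h))

theorem bayes_posterior_mean_limit_step_general
    (θ1 θ2 a b : ℝ)
    (δ : ℝ → ℝ)
    (hδ : ∀ C : ℝ, δ C =
      (θ1 * Real.exp (-a ^ 2 / 2 - (b - C) ^ 2 / 2) +
        θ2 * Real.exp (-b ^ 2 / 2 - (a - C) ^ 2 / 2)) /
      (Real.exp (-a ^ 2 / 2 - (b - C) ^ 2 / 2) +
        Real.exp (-b ^ 2 / 2 - (a - C) ^ 2 / 2))) :
    (a < b → Filter.Tendsto δ Filter.atTop (nhds θ1)) ∧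
    (b < a → Filter.Tendsto δ Filter.atTop (nhds θ2)) := by
  obtain rfl := funext hδ
  refine ⟨fun h => ?_, fun h => ?_⟩
  · refine tendsto_weighted_mean_of_tendsto_div_zero (fun _ => (exp_pos _).ne') ?_ θ1 θ2
    simpa only [exp_gaussian_cross_div] using tendsto_exp_sub_mul_atTop_of_lt h
  · have hratio : Tendsto (fun C => exp (-a ^ 2 / 2 - (b - C) ^ 2 / 2) /
        exp (-b ^ 2 / 2 - (a - C) ^ 2 / 2)) atTop (𝓝 0) := by
      simpa only [exp_gaussian_cross_div] using tendsto_exp_sub_mul_atTop_of_lt h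
    simpa only [add_comm] using
      tendsto_weighted_mean_of_tendsto_div_zero (fun _ => (exp_pos _).ne') hratio θ2 θ1

/-- Without bounds on identification strength, Bayes posterior means can
converge to the step function selecting the argmin of the moments. -/
theorem bayes_posterior_mean_limit_step
    (θ1 θ2 a b : ℝ) (hab : a ≠ b)
    (δ : ℝ → ℝ)
    (hδ : ∀ C : ℝ, δ C =
      (θ1 * Real.exp (-a ^ 2 / 2 - (b - C) ^ 2 / 2) +
        θ2 * Real.exp (-b ^ 2 / 2 - (a - C) ^ 2 / 2)) /
      (Real.exp (-a ^ 2 / 2 - (b - C) ^ 2 / 2) +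
        Real.exp (-b ^ 2 / 2 - (a - C) ^ 2 / 2))) :
    (a < b → Filter.Tendsto δ Filter.atTop (nhds θ1)) ∧
    (b < a → Filter.Tendsto δ Filter.atTop (nhds θ2)) :=
  bayes_posterior_mean_limit_step_general θ1 θ2 a b δ hδ
end

section
/- Let E be a real normed vector space, p a positive natural number, W ≥ 0 and r̄ ≥ 0. Say that a function δ : E → EuclideanSpace ℝ (Fin p) is of softmax posterior-mean form with parameters (W, r̄) if there exist a nonempty finite index set J and, for each j ∈ J, a continuous linear functional η_j on E with ‖η_j‖ ≤ W, constants c_j ∈ ℝ, weights π_j > 0, and vectors r_j with ‖r_j‖ ≤ r̄, such that δ(w) = (∑_j π_j·exp(η_j(w) − c_j)·r_j)/(∑_j π_j·exp(η_j(w) − c_j)) for all w. Suppose (δ_s)_{s∈ℕ} is a sequence of functions, each of softmax posterior-mean form with parameters (W, r̄), and suppose (δ_s(w)) converges for every w in a dense subset D of E. Then (δ_s(w)) converges for every w ∈ E, and the pointwise limit δ* : E → EuclideanSpace ℝ (Fin p) is Lipschitz with constant r̄·√p·W. -/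
open scoped BigOperators

/-- A function is of softmax posterior-mean form with parameters `(W, rbar)` if
it is a Bayes posterior mean for a finitely supported prior whose
likelihood-ratio functionals are bounded in dual norm by `W` and whose estimand
values are bounded in norm by `rbar`. -/
def SoftmaxPosteriorMeanForm {E : Type*} [NormedAddCommGroup E] [NormedSpace ℝ E]
    (p : ℕ) (W rbar : ℝ) (δ : E → EuclideanSpace ℝ (Fin p)) : Prop :=
  ∃ (m : ℕ), 0 < m ∧
    ∃ (η : Fin m → E →L[ℝ] ℝ) (c : Fin m → ℝ) (pj : Fin m → ℝ)
      (r : Fin m → EuclideanSpace ℝ (Fin p)),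
      (∀ j, ‖η j‖ ≤ W) ∧ (∀ j, 0 < pj j) ∧ (∀ j, ‖r j‖ ≤ rbar) ∧
      ∀ w, δ w = (∑ j, pj j * Real.exp (η j w - c j))⁻¹ •
        ∑ j, (pj j * Real.exp (η j w - c j)) • r j

/-!
Along the segment from `w'` to `w`, the derivative of a posterior mean is the posterior
covariance of the log-likelihood increments `η j (w - w')` with the estimand values `r j`.
By Cauchy–Schwarz it is at most the posterior standard deviation of the increments, which is at
most `W * ‖w - w'‖`, times the root second moment of `r`, which is at most `rbar`; so each
estimator is `rbar * W`-Lipschitz, and `rbar * W ≤ rbar * √p * W`. A uniformly Lipschitz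
sequence converging on a dense set is Cauchy at every point, and `K`-Lipschitz maps are closed
under pointwise limits.
-/

open Finset Filter Topology
open scoped NNReal

section WeightedMean

variable {ι F : Type*} [Fintype ι] [NormedAddCommGroup F] [NormedSpace ℝ F]

noncomputable def weightedMean (a : ι → ℝ) (r : ι → F) : F :=
  (∑ j, a j)⁻¹ • ∑ j, a j • r j

def weightedCov (q x : ι → ℝ) (r : ι → F) : F :=
  ∑ j, (q j * (x j - ∑ k, q k * x k)) • r j

theorem sum_mul_sub_sq_le {q x : ι → ℝ} (hq : ∑ j, q j = 1) :
    ∑ j, q j * (x j - ∑ k, q k * x k) ^ 2 ≤ ∑ j, q j * x j ^ 2 := by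
  set m := ∑ k, q k * x k
  have hvar : ∑ j, q j * (x j - m) ^ 2 = ∑ j, q j * x j ^ 2 - m ^ 2 := by
    calc ∑ j, q j * (x j - m) ^ 2 = ∑ j, (q j * x j ^ 2 - 2 * m * (q j * x j) + m ^ 2 * q j) :=
          sum_congr rfl fun j _ => by ring
      _ = ∑ j, q j * x j ^ 2 - m ^ 2 := by
          rw [sum_add_distrib, sum_sub_distrib, ← mul_sum, ← mul_sum, hq]; ring
  rw [hvar]
  exact sub_le_self _ (sq_nonneg _)

theorem norm_weightedCov_le {q x : ι → ℝ} {r : ι → F} {A R : ℝ} (hq0 : ∀ j, 0 ≤ q j)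
    (hq1 : ∑ j, q j = 1) (hx : ∀ j, |x j| ≤ A) (hr : ∀ j, ‖r j‖ ≤ R) (hA : 0 ≤ A)
    (hR : 0 ≤ R) : ‖weightedCov q x r‖ ≤ A * R := by
  set y := fun j => x j - ∑ k, q k * x k
  have hnorm : ‖weightedCov q x r‖ ≤ ∑ j, q j * |y j| * ‖r j‖ := by
    refine (norm_sum_le _ _).trans_eq (sum_congr rfl fun j _ => ?_)
    rw [norm_smul, Real.norm_eq_abs, abs_mul, abs_of_nonneg (hq0 j)]
  have hmoment_nonneg : ∀ z : ι → ℝ, 0 ≤ ∑ j, q j * z j ^ 2 :=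
    fun z => sum_nonneg fun j _ => mul_nonneg (hq0 j) (sq_nonneg _)
  have hmoment_le : ∀ {z : ι → ℝ} {B : ℝ}, (∀ j, z j ^ 2 ≤ B ^ 2) → ∑ j, q j * z j ^ 2 ≤ B ^ 2 :=
    fun hz => (sum_le_sum fun j _ => mul_le_mul_of_nonneg_left (hz _) (hq0 j)).trans_eq
      (by rw [← sum_mul, hq1, one_mul])
  have hcs : (∑ j, q j * |y j| * ‖r j‖) ^ 2 ≤ (∑ j, q j * y j ^ 2) * ∑ j, q j * ‖r j‖ ^ 2 :=
    sum_sq_le_sum_mul_sum_of_sq_le_mul _ (fun j _ => mul_nonneg (hq0 j) (sq_nonneg _))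
      (fun j _ => mul_nonneg (hq0 j) (sq_nonneg _))
      fun j _ => le_of_eq (by rw [← sq_abs (y j)]; ring)
  have hy : ∑ j, q j * y j ^ 2 ≤ A ^ 2 :=
    (sum_mul_sub_sq_le hq1).trans (hmoment_le fun j => sq_le_sq.mpr ((hx j).trans (le_abs_self A)))
  have hr2 : ∑ j, q j * ‖r j‖ ^ 2 ≤ R ^ 2 :=
    hmoment_le fun j => pow_le_pow_left₀ (norm_nonneg _) (hr j) 2
  refine hnorm.trans (le_of_sq_le_sq ?_ (mul_nonneg hA hR))
  calc _ ≤ _ := hcs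
    _ ≤ A ^ 2 * R ^ 2 := mul_le_mul hy hr2 (hmoment_nonneg _) (sq_nonneg A)
    _ = (A * R) ^ 2 := (mul_pow A R 2).symm

theorem hasDerivAt_weightedMean {a : ι → ℝ → ℝ} {x : ι → ℝ} {t : ℝ}
    (ha : ∀ j, HasDerivAt (a j) (a j t * x j) t) (hA : ∑ j, a j t ≠ 0) (r : ι → F) :
    HasDerivAt (fun s => weightedMean (fun j => a j s) r)
      (weightedCov (fun j => a j t / ∑ k, a k t) x r) t := by
  have hS : HasDerivAt (fun s => ∑ j, a j s • r j) (∑ j, (a j t * x j) • r j) t :=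
    .fun_sum fun j _ => (ha j).smul_const (r j)
  refine (((HasDerivAt.fun_sum fun j _ => ha j).fun_inv hA).fun_smul hS).congr_deriv ?_
  simp only [weightedCov, div_mul_eq_mul_div, ← sum_div, smul_sum, smul_smul, ← sum_add_distrib]
  refine sum_congr rfl fun j _ => ?_
  match_scalars
  field_simp
  ring

end WeightedMean

section PosteriorMean

variable {ι E F : Type*} [NormedAddCommGroup E] [NormedSpace ℝ E]
  [NormedAddCommGroup F] [NormedSpace ℝ F]

noncomputable def posteriorWeight (η : ι → E →L[ℝ] ℝ) (c π : ι → ℝ) (w : E) (j : ι) : ℝ :=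
  π j * Real.exp (η j w - c j)

theorem posteriorWeight_pos {η : ι → E →L[ℝ] ℝ} {c π : ι → ℝ} (hπ : ∀ j, 0 < π j) (w : E)
    (j : ι) : 0 < posteriorWeight η c π w j :=
  mul_pos (hπ j) (Real.exp_pos _)

theorem hasDerivAt_posteriorWeight_add_smul (η : ι → E →L[ℝ] ℝ) (c π : ι → ℝ) (w v : E) (j : ι)
    (t : ℝ) : HasDerivAt (fun s => posteriorWeight η c π (w + s • v) j)
      (posteriorWeight η c π (w + t • v) j * η j v) t := by
  have hline : HasDerivAt (fun s => η j (w + s • v) - c j) (η j v) t := by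
    simpa using ((η j).hasFDerivAt.comp_hasDerivAt t
      (((hasDerivAt_id t).smul_const v).const_add w)).sub_const (c j)
  simpa only [posteriorWeight, mul_assoc] using hline.exp.const_mul (π j)

theorem norm_weightedMean_posteriorWeight_sub_le [Fintype ι] [Nonempty ι]
    {η : ι → E →L[ℝ] ℝ} {c π : ι → ℝ} {r : ι → F} {W R : ℝ} (hη : ∀ j, ‖η j‖ ≤ W)
    (hπ : ∀ j, 0 < π j) (hr : ∀ j, ‖r j‖ ≤ R) (hW : 0 ≤ W) (hR : 0 ≤ R) (w w' : E) :
    ‖weightedMean (posteriorWeight η c π w) r - weightedMean (posteriorWeight η c π w') r‖ ≤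
      R * W * ‖w - w'‖ := by
  set v := w - w'
  set a := fun j (t : ℝ) => posteriorWeight η c π (w' + t • v) j
  have hsum_pos : ∀ t, 0 < ∑ k, a k t :=
    fun t => sum_pos (fun k _ => posteriorWeight_pos hπ _ k) univ_nonempty
  have hderiv : ∀ t, HasDerivAt (fun s => weightedMean (fun j => a j s) r)
      (weightedCov (fun j => a j t / ∑ k, a k t) (fun j => η j v) r) t := fun t =>
    hasDerivAt_weightedMean (fun j => hasDerivAt_posteriorWeight_add_smul η c π w' v j t)
      (hsum_pos t).ne' r
  have hbound : ∀ t, ‖weightedCov (fun j => a j t / ∑ k, a k t) (fun j => η j v) r‖ ≤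
      W * ‖v‖ * R := fun t =>
    norm_weightedCov_le (fun j => div_nonneg (posteriorWeight_pos hπ _ j).le (hsum_pos t).le)
      (by rw [← sum_div, div_self (hsum_pos t).ne'])
      (fun j => ((η j).le_opNorm v).trans (mul_le_mul_of_nonneg_right (hη j) (norm_nonneg v)))
      hr (mul_nonneg hW (norm_nonneg v)) hR
  have := norm_image_sub_le_of_norm_deriv_le_segment_01'
    (fun t _ => (hderiv t).hasDerivWithinAt) (fun t _ => hbound t)
  simp only [a, one_smul, zero_smul, add_zero, v, add_sub_cancel] at this
  linarith

end PosteriorMean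

section DenseLimit

variable {β X Y : Type*} [SemilatticeSup β] [Nonempty β] [PseudoMetricSpace X]
  [PseudoMetricSpace Y] {f : β → X → Y} {K : ℝ≥0} {D : Set X}

theorem cauchySeq_of_lipschitzWith_of_dense (hf : ∀ n, LipschitzWith K (f n)) (hD : Dense D)
    (hDf : ∀ x ∈ D, CauchySeq (f · x)) (x : X) : CauchySeq (f · x) := by
  refine Metric.cauchySeq_iff'.mpr fun ε hε => ?_
  obtain ⟨ρ, hρ, hKρ⟩ := exists_pos_mul_lt (div_pos hε three_pos) K
  obtain ⟨y, hxy, hy⟩ := Metric.dense_iff.mp hD x ρ hρ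
  have hclose : ∀ n, dist (f n x) (f n y) < ε / 3 := fun n =>
    ((hf n).dist_le_mul x y).trans_lt <|
      (mul_le_mul_of_nonneg_left (Metric.mem_ball'.mp hxy).le K.2).trans_lt hKρ
  obtain ⟨N, hN⟩ := Metric.cauchySeq_iff'.mp (hDf y hy) (ε / 3) (div_pos hε three_pos)
  refine ⟨N, fun n hn => ?_⟩
  calc dist (f n x) (f N x)
        ≤ dist (f n x) (f n y) + dist (f n y) (f N y) + dist (f N y) (f N x) :=
          dist_triangle4 _ _ _ _
    _ < ε / 3 + ε / 3 + ε / 3 := by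
        gcongr
        · exact hclose n
        · exact hN n hn
        · rw [dist_comm]; exact hclose N
    _ = ε := by ring

theorem exists_tendsto_lipschitzWith_of_dense [CompleteSpace Y]
    (hf : ∀ n, LipschitzWith K (f n)) (hD : Dense D)
    (hDf : ∀ x ∈ D, ∃ l, Tendsto (f · x) atTop (𝓝 l)) :
    ∃ g : X → Y, (∀ x, Tendsto (f · x) atTop (𝓝 (g x))) ∧ LipschitzWith K g := by
  choose g hg using fun x => cauchySeq_tendsto_of_complete <|
    cauchySeq_of_lipschitzWith_of_dense hf hD (fun y hy => (hDf y hy).choose_spec.cauchySeq) x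
  exact ⟨g, hg, (isClosed_setOfPred_lipschitzWith K).mem_of_tendsto (tendsto_pi_nhds.mpr hg)
    (.of_forall hf)⟩

end DenseLimit

theorem SoftmaxPosteriorMeanForm.lipschitzWith {E : Type*} [NormedAddCommGroup E]
    [NormedSpace ℝ E] {p : ℕ} {W rbar : ℝ} {δ : E → EuclideanSpace ℝ (Fin p)}
    (h : SoftmaxPosteriorMeanForm p W rbar δ) (hW : 0 ≤ W) (hrbar : 0 ≤ rbar) :
    LipschitzWith ⟨rbar * W, mul_nonneg hrbar hW⟩ δ := by
  obtain ⟨m, hm, η, c, π, r, hη, hπ, hr, hδ⟩ := h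
  have : Nonempty (Fin m) := ⟨⟨0, hm⟩⟩
  refine .of_dist_le_mul fun w w' => ?_
  rw [dist_eq_norm, dist_eq_norm, hδ w, hδ w']
  exact norm_weightedMean_posteriorWeight_sub_le hη hπ hr hW hrbar w w'

/-- Pointwise limits (on a dense set) of softmax posterior-mean form estimators
converge everywhere and are Lipschitz with constant `rbar * √p * W`. -/
theorem softmax_posterior_mean_limit_lipschitz
    {E : Type*} [NormedAddCommGroup E] [NormedSpace ℝ E]
    (p : ℕ) (hp : 0 < p) (W rbar : ℝ) (hW : 0 ≤ W) (hrbar : 0 ≤ rbar)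
    (δ : ℕ → E → EuclideanSpace ℝ (Fin p))
    (hform : ∀ s : ℕ, SoftmaxPosteriorMeanForm p W rbar (δ s))
    (D : Set E) (hD : Dense D)
    (hconv : ∀ w ∈ D, ∃ l, Filter.Tendsto (fun s => δ s w) Filter.atTop (nhds l)) :
    ∃ δstar : E → EuclideanSpace ℝ (Fin p),
      (∀ w : E, Filter.Tendsto (fun s => δ s w) Filter.atTop (nhds (δstar w))) ∧
      ∀ w w' : E, ‖δstar w - δstar w'‖ ≤ rbar * Real.sqrt p * W * ‖w - w'‖ := by
  obtain ⟨δstar, hlim, hδstar⟩ :=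
    exists_tendsto_lipschitzWith_of_dense (fun s => (hform s).lipschitzWith hW hrbar) hD hconv
  refine ⟨δstar, hlim, fun w w' => ?_⟩
  have hsqrt : 1 ≤ Real.sqrt p := Real.one_le_sqrt.mpr (by exact_mod_cast hp)
  calc ‖δstar w - δstar w'‖ ≤ rbar * 1 * W * ‖w - w'‖ := by
        rw [mul_one, ← dist_eq_norm, ← dist_eq_norm]
        exact hδstar.dist_le_mul w w'
    _ ≤ rbar * Real.sqrt p * W * ‖w - w'‖ := by gcongr
end
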